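/- For every n ≥ 1, the set of f ∈ F₂[a,u,u⁻¹] with ψₙ(f) = f (equality in F₂[a,u,u⁻¹][x]/(x^{2ⁿ}), where f is regarded as a constant in x) is exactly the subalgebra F₂[a, u^{2ⁿ}, u^{−2ⁿ}] generated by a, u^{2ⁿ} and u^{−2ⁿ}. -/

import Mathlib

noncomputable section
set_option maxHeartbeats 1000000
set_option synthInstance.maxHeartbeats 400000

open Polynomial

/-- The field with two elements. -/
abbrev F2 : Type := ZMod 2
/-- `F₂[a]`, where `a` is the polynomial variable `X`. -/
abbrev Ka : Type := Polynomial F2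
/-- `F₂[a,u,u⁻¹]`, the Laurent polynomial ring over `F₂[a]`, with `u = T 1`. -/
abbrev M1 : Type := LaurentPolynomial Ka

/-- `a` as an element of `F₂[a,u,u⁻¹]`. -/
def aM : M1 := LaurentPolynomial.C Polynomial.X
/-- `u` as an element of `F₂[a,u,u⁻¹]`. -/
def uM : M1 := LaurentPolynomial.T 1

/-- `F₂[a,u,u⁻¹][x]`, realized as the monoid algebra over `F₂[a]` on the monoid
recording the `u`-exponent (in `ℤ`) and the `x`-exponent (in `ℕ`). -/
abbrev Bx : Type := AddMonoidAlgebra Ka (ℤ × ℕ)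

/-- The variable `x` of `F₂[a,u,u⁻¹][x]`. -/
def xB : Bx := AddMonoidAlgebra.single ((0 : ℤ), (1 : ℕ)) 1

/-- `u` as a unit of `F₂[a,u,u⁻¹][x]`. -/
def uB : Bxˣ where
  val := AddMonoidAlgebra.single ((1 : ℤ), (0 : ℕ)) 1
  inv := AddMonoidAlgebra.single ((-1 : ℤ), (0 : ℕ)) 1
  val_inv := by
    rw [AddMonoidAlgebra.single_mul_single]
    norm_num
    exact (AddMonoidAlgebra.one_def (R := Ka) (M := ℤ × ℕ)).symm
  inv_val := by
    rw [AddMonoidAlgebra.single_mul_single]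
    norm_num
    exact (AddMonoidAlgebra.one_def (R := Ka) (M := ℤ × ℕ)).symm

/-- The truncated ring `F₂[a,u,u⁻¹][x]/(x^{2ⁿ})`. -/
abbrev Tx (n : ℕ) : Type := Bx ⧸ Ideal.span {xB ^ 2 ^ n}

instance (n : ℕ) : CommRing (Tx n) := Ideal.Quotient.commRing _
instance (n : ℕ) : Algebra Ka (Tx n) := Ideal.Quotient.algebra _

/-- The quotient map. -/
def mkT (n : ℕ) : Bx →ₐ[Ka] Tx n := Ideal.Quotient.mkₐ Ka _

/-- `u + a²x` is a unit of `F₂[a,u,u⁻¹][x]/(x^{2ⁿ})`, since `u` is a unit and `a²x` is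
nilpotent there. -/
lemma isUnit_uax (n : ℕ) :
    IsUnit (mkT n (↑uB) + algebraMap Ka (Tx n) (X ^ 2) * mkT n xB) := by
  refine IsNilpotent.isUnit_add_left_of_commute ⟨2 ^ n, ?_⟩
    (uB.isUnit.map (mkT n)) (by exact Commute.all _ _)
  have hx : mkT n xB ^ 2 ^ n = 0 := by
    rw [← map_pow]
    exact Ideal.Quotient.eq_zero_iff_mem.2 (Ideal.subset_span rfl)
  rw [mul_pow, hx, mul_zero]

/-- `ψₙ : F₂[a,u,u⁻¹] → F₂[a,u,u⁻¹][x]/(x^{2ⁿ})`: the unique `F₂[a]`-algebra homomorphism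
(in particular `F₂`-algebra homomorphism with `ψₙ(a) = a`) sending `u ↦ u + a²x`. -/
def psiN (n : ℕ) : M1 →ₐ[Ka] Tx n :=
  AddMonoidAlgebra.lift Ka (Tx n) ℤ
    ((Units.coeHom (Tx n)).comp (zpowersHom (Tx n)ˣ (isUnit_uax n).unit))

/-- The inclusion `F₂[a,u,u⁻¹] → F₂[a,u,u⁻¹][x]/(x^{2ⁿ})` regarding `f` as a constant
in `x`: the unique `F₂[a]`-algebra homomorphism sending `u ↦ u`. -/
def constT (n : ℕ) : M1 →ₐ[Ka] Tx n :=
  AddMonoidAlgebra.lift Ka (Tx n) ℤ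
    ((Units.coeHom (Tx n)).comp (zpowersHom (Tx n)ˣ (uB.isUnit.map (mkT n)).unit))
open LaurentPolynomial

lemma two_eq_zero_Ka : (2 : Ka) = 0 := by
  have := CharP.cast_eq_zero Ka 2
  simpa using this

lemma two_eq_zero_alg {A : Type*} [CommRing A] [Algebra Ka A] : (2 : A) = 0 := by
  have h := map_ofNat (algebraMap Ka A) 2
  rw [← h, two_eq_zero_Ka, map_zero]

lemma add_sq_char2 {A : Type*} [CommRing A] (h2 : (2 : A) = 0) (x y : A) :
    (x + y) ^ 2 = x ^ 2 + y ^ 2 := by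
  have : (x + y) ^ 2 = x ^ 2 + 2 * (x * y) + y ^ 2 := by ring
  rw [this, h2]; ring

lemma add_pow_char2 {A : Type*} [CommRing A] (h2 : (2 : A) = 0) (x y : A) (m : ℕ) :
    (x + y) ^ 2 ^ m = x ^ 2 ^ m + y ^ 2 ^ m := by
  induction m with
  | zero => simp
  | succ m ih =>
    rw [pow_succ, pow_mul, pow_mul, pow_mul, ih, add_sq_char2 h2]

/-- `Ka[y]/(y^{2ⁿ})`. -/
abbrev Rn (n : ℕ) : Type := AdjoinRoot ((Polynomial.X : Polynomial Ka) ^ 2 ^ n)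

def yR (n : ℕ) : Rn n := AdjoinRoot.root _

lemma yR_pow (n : ℕ) : yR n ^ 2 ^ n = 0 := by
  rw [yR, ← AdjoinRoot.mk_X, ← map_pow, AdjoinRoot.mk_self]

lemma yR_ne (n : ℕ) {c : Ka} (hc : c ≠ 0) {m : ℕ} (hm : m < 2 ^ n) :
    algebraMap Ka (Rn n) c * yR n ^ m ≠ 0 := by
  rw [yR, AdjoinRoot.algebraMap_eq, ← AdjoinRoot.mk_X, ← map_pow]
  rw [show (AdjoinRoot.of _) c = AdjoinRoot.mk _ (Polynomial.C c) from rfl]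
  rw [← map_mul]
  intro h0
  rw [AdjoinRoot.mk_eq_zero] at h0
  have hdvd := h0
  have hne : Polynomial.C c * (Polynomial.X : Polynomial Ka) ^ m ≠ 0 := by
    intro h0
    rcases mul_eq_zero.1 h0 with h | h
    · exact hc (by simpa using h)
    · exact pow_ne_zero _ Polynomial.X_ne_zero h
  have hd := Polynomial.natDegree_le_of_dvd hdvd hne
  rw [Polynomial.natDegree_X_pow] at hd
  have : (Polynomial.C c * (Polynomial.X : Polynomial Ka) ^ m).natDegree = m := by
    rw [Polynomial.natDegree_C_mul_X_pow _ _ hc]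
  omega
/-- `w = 1 + a²y` in `Rn n`. -/
def wR (n : ℕ) : Rn n := 1 + algebraMap Ka (Rn n) (Polynomial.X ^ 2) * yR n

lemma isUnit_wR (n : ℕ) : IsUnit (wR n) := by
  rw [wR]
  refine IsNilpotent.isUnit_add_left_of_commute ⟨2 ^ n, ?_⟩ isUnit_one (Commute.all _ _)
  rw [mul_pow, ← map_pow, yR_pow, mul_zero]

def wU (n : ℕ) : (Rn n)ˣ := (isUnit_wR n).unit

lemma wU_coe (n : ℕ) : (wU n : Rn n) = wR n := (isUnit_wR n).unit_spec

lemma wU_pow_2n (n : ℕ) : wU n ^ 2 ^ n = 1 := by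
  ext
  push_cast [wU_coe]
  rw [wR, add_pow_char2 two_eq_zero_alg, one_pow, mul_pow, ← map_pow, yR_pow, mul_zero, add_zero]

lemma wU_pow_half (n : ℕ) (hn : 1 ≤ n) : wU n ^ 2 ^ (n - 1) ≠ 1 := by
  intro h
  have h' : (wR n) ^ 2 ^ (n - 1) = 1 := by
    rw [← wU_coe, ← Units.val_pow_eq_pow_val, h, Units.val_one]
  rw [wR, add_pow_char2 two_eq_zero_alg, one_pow, mul_pow, ← map_pow] at h'
  have h'' : algebraMap Ka (Rn n) ((Polynomial.X ^ 2) ^ 2 ^ (n - 1)) * yR n ^ 2 ^ (n - 1) = 0 := by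
    have := congrArg (fun z => z - 1) h'
    simpa using this
  exact yR_ne n (pow_ne_zero _ (pow_ne_zero _ Polynomial.X_ne_zero))
    (Nat.pow_lt_pow_right one_lt_two (by omega)) h''

lemma orderOf_wU (n : ℕ) (hn : 1 ≤ n) : orderOf (wU n) = 2 ^ n := by
  have hdvd : orderOf (wU n) ∣ 2 ^ n := orderOf_dvd_of_pow_eq_one (wU_pow_2n n)
  obtain ⟨i, hi, hio⟩ := (Nat.dvd_prime_pow Nat.prime_two).1 hdvd
  rcases Nat.lt_or_ge i n with h | h
  · exfalso
    apply wU_pow_half n hn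
    apply orderOf_dvd_iff_pow_eq_one.1
    rw [hio]
    exact pow_dvd_pow 2 (by omega)
  · rw [hio]; congr 1; omega

lemma wU_zpow_eq_one (n : ℕ) (hn : 1 ≤ n) (k : ℤ) :
    wU n ^ k = 1 ↔ (2 ^ n : ℤ) ∣ k := by
  rw [← orderOf_dvd_iff_zpow_eq_one, orderOf_wU n hn]
  norm_num
/-- `R[u,u⁻¹]` with `R = Ka[y]/(y^{2ⁿ})`. -/
abbrev Sx (n : ℕ) : Type := LaurentPolynomial (Rn n)

/-- The monoid hom `(z, j) ↦ y^j u^{z+j}` into `Sx n`. -/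
def gS (n : ℕ) : Multiplicative (ℤ × ℕ) →* Sx n where
  toFun p := LaurentPolynomial.C (yR n ^ (Multiplicative.toAdd p).2) *
      LaurentPolynomial.T ((Multiplicative.toAdd p).1 + (Multiplicative.toAdd p).2)
  map_one' := by simp
  map_mul' p q := by
    simp only [toAdd_mul, Prod.fst_add, Prod.snd_add, pow_add, map_mul, Nat.cast_add]
    rw [show (Multiplicative.toAdd p).1 + (Multiplicative.toAdd q).1 +
        (((Multiplicative.toAdd p).2 : ℤ) + ((Multiplicative.toAdd q).2 : ℤ))
        = ((Multiplicative.toAdd p).1 + (Multiplicative.toAdd p).2)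
          + ((Multiplicative.toAdd q).1 + (Multiplicative.toAdd q).2) by ring,
      LaurentPolynomial.T_add]
    ring

/-- The map `Bx → Sx n`, `x ↦ y·u`, `u ↦ u`. -/
def phiB (n : ℕ) : Bx →ₐ[Ka] Sx n := AddMonoidAlgebra.lift Ka (Sx n) (ℤ × ℕ) (gS n)

lemma phiB_single (n : ℕ) (z : ℤ) (j : ℕ) (c : Ka) :
    phiB n (AddMonoidAlgebra.single (z, j) c) =
      c • (LaurentPolynomial.C (yR n ^ j) * LaurentPolynomial.T (z + j)) := by
  rw [phiB, AddMonoidAlgebra.lift_single]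
  rfl

lemma phiB_xpow (n : ℕ) : phiB n (xB ^ 2 ^ n) = 0 := by
  rw [xB, map_pow, phiB_single]
  simp only [pow_one, one_smul, Nat.cast_one, zero_add]
  rw [mul_pow, ← map_pow, yR_pow, map_zero, zero_mul]

/-- The induced map `Tx n → Sx n`. -/
def phiT (n : ℕ) : Tx n →ₐ[Ka] Sx n :=
  Ideal.Quotient.liftₐ _ (phiB n) (by
    intro a ha
    rw [Ideal.mem_span_singleton'] at ha
    obtain ⟨r, rfl⟩ := ha
    rw [map_mul, phiB_xpow, mul_zero])

lemma phiT_mkT (n : ℕ) (b : Bx) : phiT n (mkT n b) = phiB n b := by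
  rw [phiT, mkT, Ideal.Quotient.mkₐ_eq_mk, Ideal.Quotient.liftₐ_apply]
  rfl
/-- `T z` as a unit of `Sx n`. -/
def TU (n : ℕ) (z : ℤ) : (Sx n)ˣ where
  val := LaurentPolynomial.T z
  inv := LaurentPolynomial.T (-z)
  val_inv := by rw [← LaurentPolynomial.T_add]; simp [LaurentPolynomial.T_zero]
  inv_val := by rw [← LaurentPolynomial.T_add]; simp [LaurentPolynomial.T_zero]

def TUh (n : ℕ) : Multiplicative ℤ →* (Sx n)ˣ where
  toFun z := TU n (Multiplicative.toAdd z)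
  map_one' := by refine Units.ext ?_; show LaurentPolynomial.T _ = _; simp [LaurentPolynomial.T_zero]
  map_mul' z w := by
    refine Units.ext ?_
    show LaurentPolynomial.T _ = LaurentPolynomial.T _ * LaurentPolynomial.T _
    rw [← LaurentPolynomial.T_add]
    rfl

lemma TU_zpow (n : ℕ) (k : ℤ) : TU n 1 ^ k = TU n k := by
  have h1 : TU n 1 = TUh n (Multiplicative.ofAdd 1) := rfl
  have h2 : TU n k = TUh n (Multiplicative.ofAdd k) := rfl
  rw [h1, h2, ← map_zpow, ← ofAdd_zsmul]
  norm_num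

def Cm (n : ℕ) : Rn n →* Sx n :=
  (LaurentPolynomial.C : Rn n →+* Sx n).toMonoidHom

def phiTm (n : ℕ) : Tx n →* Sx n := ((phiT n) : Tx n →+* Sx n).toMonoidHom

lemma phiT_U (n : ℕ) :
    Units.map (phiTm n) ((isUnit_uax n).unit) = Units.map (Cm n) (wU n) * TU n 1 := by
  refine Units.ext ?_
  rw [Units.val_mul, Units.coe_map, Units.coe_map]
  show phiT n ((isUnit_uax n).unit : Tx n)
      = LaurentPolynomial.C (wU n : Rn n) * LaurentPolynomial.T 1
  rw [(isUnit_uax n).unit_spec, map_add, map_mul, AlgHom.commutes, phiT_mkT, phiT_mkT]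
  rw [show ((uB : Bxˣ) : Bx) = AddMonoidAlgebra.single ((1:ℤ),(0:ℕ)) 1 from rfl, xB,
    phiB_single, phiB_single, wU_coe, wR, LaurentPolynomial.algebraMap_apply]
  simp only [pow_zero, map_one, Nat.cast_zero, add_zero, Nat.cast_one, zero_add, one_smul,
    pow_one, one_mul]
  rw [map_add, map_one, map_mul, add_mul, one_mul]
  ring

lemma phiT_V (n : ℕ) :
    Units.map (phiTm n) ((uB.isUnit.map (mkT n)).unit) = TU n 1 := by
  refine Units.ext ?_
  rw [Units.coe_map]
  show phiT n ((uB.isUnit.map (mkT n)).unit : Tx n) = LaurentPolynomial.T 1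
  rw [(uB.isUnit.map (mkT n)).unit_spec]
  show phiT n (mkT n (uB : Bx)) = _
  rw [phiT_mkT,
    show ((uB : Bxˣ) : Bx) = AddMonoidAlgebra.single ((1:ℤ),(0:ℕ)) 1 from rfl, phiB_single]
  simp
lemma phiT_psiN_single (n : ℕ) (k : ℤ) (c : Ka) :
    phiT n (psiN n (AddMonoidAlgebra.single k c)) =
      AddMonoidAlgebra.single k (c • ((wU n ^ k : (Rn n)ˣ) : Rn n)) := by
  rw [psiN, AddMonoidAlgebra.lift_single, map_smul]
  have h1 : (((Units.coeHom (Tx n)).comp (zpowersHom (Tx n)ˣ (isUnit_uax n).unit))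
      (Multiplicative.ofAdd k)) = (((isUnit_uax n).unit ^ k : (Tx n)ˣ) : Tx n) := rfl
  rw [h1]
  have h2 : phiT n (((isUnit_uax n).unit ^ k : (Tx n)ˣ) : Tx n)
      = ((Units.map (phiTm n) ((isUnit_uax n).unit ^ k) : (Sx n)ˣ) : Sx n) := rfl
  rw [h2, map_zpow, phiT_U, mul_zpow, ← map_zpow, TU_zpow, Units.val_mul, Units.coe_map]
  have h3 : ((TU n k : (Sx n)ˣ) : Sx n) = LaurentPolynomial.T k := rfl
  have h4 : (Cm n) ((wU n ^ k : (Rn n)ˣ) : Rn n)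
      = LaurentPolynomial.C ((wU n ^ k : (Rn n)ˣ) : Rn n) := rfl
  rw [h3, h4, ← LaurentPolynomial.single_eq_C_mul_T, AddMonoidAlgebra.smul_single]

lemma phiT_constT_single (n : ℕ) (k : ℤ) (c : Ka) :
    phiT n (constT n (AddMonoidAlgebra.single k c)) =
      AddMonoidAlgebra.single k (c • (1 : Rn n)) := by
  rw [constT, AddMonoidAlgebra.lift_single, map_smul]
  have h1 : (((Units.coeHom (Tx n)).comp (zpowersHom (Tx n)ˣ (uB.isUnit.map (mkT n)).unit))
      (Multiplicative.ofAdd k)) = (((uB.isUnit.map (mkT n)).unit ^ k : (Tx n)ˣ) : Tx n) := rfl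
  rw [h1]
  have h2 : phiT n (((uB.isUnit.map (mkT n)).unit ^ k : (Tx n)ˣ) : Tx n)
      = ((Units.map (phiTm n) ((uB.isUnit.map (mkT n)).unit ^ k) : (Sx n)ˣ) : Sx n) := rfl
  rw [h2, map_zpow, phiT_V, TU_zpow]
  have h3 : ((TU n k : (Sx n)ˣ) : Sx n) = LaurentPolynomial.T k := rfl
  rw [h3, LaurentPolynomial.T, AddMonoidAlgebra.smul_single]

lemma dvd_of_invariant (n : ℕ) (hn : 1 ≤ n) (f : M1) (h : psiN n f = constT n f)
    (k : ℤ) (hk : k ∈ f.coeff.support) : (2 ^ n : ℤ) ∣ k := by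
  haveI : Module.IsTorsionFree Ka (Rn n) :=
    (AdjoinRoot.powerBasis' (Polynomial.monic_X_pow _)).basis.isTorsionFree
  have h2 := congrArg (phiT n) h
  rw [show f = Finsupp.sum f.coeff AddMonoidAlgebra.single from
    (AddMonoidAlgebra.sum_coeff_single f).symm] at h2
  rw [map_finsuppSum (psiN n), map_finsuppSum (constT n), map_finsuppSum (phiT n),
    map_finsuppSum (phiT n)] at h2
  simp only [phiT_psiN_single, phiT_constT_single] at h2
  have h3 : (Finsupp.sum f.coeff fun i c =>
        AddMonoidAlgebra.single i (c • ((wU n ^ i : (Rn n)ˣ) : Rn n))).coeff k =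
      (Finsupp.sum f.coeff fun i c =>
        AddMonoidAlgebra.single i (c • (1 : Rn n))).coeff k := by rw [h2]
  rw [AddMonoidAlgebra.coeff_finsuppSum, AddMonoidAlgebra.coeff_finsuppSum,
    Finsupp.sum_apply, Finsupp.sum_apply] at h3
  simp only [AddMonoidAlgebra.coeff_single, Finsupp.single_apply] at h3
  rw [Finsupp.sum_ite_eq' f.coeff k, Finsupp.sum_ite_eq' f.coeff k] at h3
  rw [if_pos hk, if_pos hk] at h3
  have hc : f.coeff k ≠ 0 := Finsupp.mem_support_iff.1 hk
  have h4 : ((wU n ^ k : (Rn n)ˣ) : Rn n) = (1 : Rn n) := by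
    have := smul_right_injective (Rn n) hc h3
    exact this
  have h5 : wU n ^ k = 1 := Units.ext (by simpa using h4)
  exact (wU_zpow_eq_one n hn k).1 h5
lemma C_mem_adjoin (c : Ka) :
    LaurentPolynomial.C c ∈ Algebra.adjoin F2 ({aM} : Set M1) := by
  rw [Algebra.adjoin_singleton_eq_range_aeval]
  refine ⟨c, ?_⟩
  show Polynomial.aeval aM c = LaurentPolynomial.C c
  have haM : aM = (IsScalarTower.toAlgHom F2 Ka M1) Polynomial.X := by
    rw [IsScalarTower.coe_toAlgHom', LaurentPolynomial.algebraMap_apply]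
    simp [aM]
  rw [haM, Polynomial.aeval_algHom_apply, Polynomial.aeval_X_left_apply,
    IsScalarTower.coe_toAlgHom', LaurentPolynomial.algebraMap_apply]
  simp

lemma T_mem_adjoin (n : ℕ) (k : ℤ) (hd : (2 ^ n : ℤ) ∣ k) :
    LaurentPolynomial.T k ∈ Algebra.adjoin F2
      ({aM, LaurentPolynomial.T (2 ^ n : ℤ), LaurentPolynomial.T (-(2 ^ n : ℤ))} : Set M1) := by
  obtain ⟨m, rfl⟩ := hd
  rcases le_or_gt 0 m with hm | hm
  · lift m to ℕ using hm
    rw [show (2 ^ n : ℤ) * (m : ℤ) = (m : ℤ) * (2 ^ n : ℤ) by ring, ← LaurentPolynomial.T_pow]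
    exact pow_mem (Algebra.subset_adjoin (by simp)) m
  · have hm' : (((-m).toNat : ℤ)) = -m := Int.toNat_of_nonneg (by omega)
    rw [show (2 ^ n : ℤ) * m = ((-m).toNat : ℤ) * (-(2 ^ n : ℤ)) by rw [hm']; ring,
      ← LaurentPolynomial.T_pow]
    exact pow_mem (Algebra.subset_adjoin (by simp)) _

lemma psiN_T (n : ℕ) (z : ℤ) :
    psiN n (LaurentPolynomial.T z) = (((isUnit_uax n).unit ^ z : (Tx n)ˣ) : Tx n) := by
  rw [LaurentPolynomial.T, psiN, AddMonoidAlgebra.lift_single, one_smul]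
  rfl

lemma constT_T (n : ℕ) (z : ℤ) :
    constT n (LaurentPolynomial.T z) =
      (((uB.isUnit.map (mkT n)).unit ^ z : (Tx n)ˣ) : Tx n) := by
  rw [LaurentPolynomial.T, constT, AddMonoidAlgebra.lift_single, one_smul]
  rfl

lemma unit_pow_eq (n : ℕ) :
    (isUnit_uax n).unit ^ (2 ^ n : ℕ) = (uB.isUnit.map (mkT n)).unit ^ (2 ^ n : ℕ) := by
  refine Units.ext ?_
  rw [Units.val_pow_eq_pow_val, Units.val_pow_eq_pow_val, (isUnit_uax n).unit_spec,
    (uB.isUnit.map (mkT n)).unit_spec]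
  have hx : mkT n (xB ^ 2 ^ n) = 0 :=
    Ideal.Quotient.eq_zero_iff_mem.2 (Ideal.subset_span rfl)
  rw [add_pow_char2 two_eq_zero_alg, mul_pow, ← map_pow (mkT n) xB, hx, mul_zero, add_zero]

lemma gen_invariant (n : ℕ) :
    ∀ g ∈ ({aM, LaurentPolynomial.T (2 ^ n : ℤ), LaurentPolynomial.T (-(2 ^ n : ℤ))} : Set M1),
      psiN n g = constT n g := by
  have hTpos : psiN n (LaurentPolynomial.T (2 ^ n : ℤ)) =
      constT n (LaurentPolynomial.T (2 ^ n : ℤ)) := by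
    rw [psiN_T, constT_T]
    congr 1
    rw [show (2 ^ n : ℤ) = ((2 ^ n : ℕ) : ℤ) by push_cast; ring, zpow_natCast, zpow_natCast,
      unit_pow_eq]
  intro g hg
  rcases hg with rfl | rfl | rfl
  · have haM : aM = algebraMap Ka M1 Polynomial.X := by
      rw [LaurentPolynomial.algebraMap_apply]; simp [aM]
    rw [haM, AlgHom.commutes, AlgHom.commutes]
  · exact hTpos
  · rw [psiN_T, constT_T]
    congr 1
    rw [zpow_neg, zpow_neg]
    congr 1
    rw [show (2 ^ n : ℤ) = ((2 ^ n : ℕ) : ℤ) by push_cast; ring, zpow_natCast, zpow_natCast,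
      unit_pow_eq]


/-- For every `n ≥ 1`, the set of `f ∈ F₂[a,u,u⁻¹]` with `ψₙ(f) = f`
(equality in `F₂[a,u,u⁻¹][x]/(x^{2ⁿ})`, `f` regarded as a constant in `x`) is exactly the
subalgebra `F₂[a, u^{2ⁿ}, u^{−2ⁿ}]` generated by `a`, `u^{2ⁿ}` and `u^{−2ⁿ}`. -/
theorem invariants_of_truncated_coaction (n : ℕ) (hn : 1 ≤ n) (f : M1) :
    psiN n f = constT n f ↔
      f ∈ Algebra.adjoin F2
        ({aM, LaurentPolynomial.T (2 ^ n : ℤ), LaurentPolynomial.T (-(2 ^ n : ℤ))} :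
          Set M1) := by
  constructor
  · intro h
    rw [show f = Finsupp.sum f.coeff AddMonoidAlgebra.single from
      (AddMonoidAlgebra.sum_coeff_single f).symm, Finsupp.sum]
    refine sum_mem ?_
    intro k hk
    rw [show (AddMonoidAlgebra.single k (f.coeff k) : M1) =
        LaurentPolynomial.C (f.coeff k) * LaurentPolynomial.T k
      from LaurentPolynomial.single_eq_C_mul_T _ _]
    refine mul_mem ?_ (T_mem_adjoin n k (dvd_of_invariant n hn f h k hk))
    exact Algebra.adjoin_mono (Set.singleton_subset_iff.2 (by simp)) (C_mem_adjoin (f.coeff k))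
  · intro hf
    have hsub : ({aM, LaurentPolynomial.T (2 ^ n : ℤ), LaurentPolynomial.T (-(2 ^ n : ℤ))} :
        Set M1) ⊆ ((AlgHom.equalizer (psiN n) (constT n)).restrictScalars F2 : Set M1) := by
      intro g hg
      exact gen_invariant n g hg
    exact Algebra.adjoin_le hsub hf
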